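/- arXiv:math/0210387 — 2 statements merged into one kernel-verified Lean document; each statement's English description precedes it below -/
import Mathlib

section
/- Coweakening w↑ is derivable in the system with switch, weakening w↓, and generic cut i↑: for any context S{ } and structure R, from S{R} one can derive S{t} using only these rules and the structural equivalence. Concretely, S{R} = S(R,[t,f]) derives S[t,(R,f)] by switch, then S[t,(R,¬R)] by w↓, then S{t} by i↑. -/
/-- Structures of system SKS. -/
inductive Str : Type
  | f : Str
  | t : Str
  | atom (n : ℕ) : Str
  | or (A B : Str) : Str
  | and (A B : Str) : Str
  | neg (A : Str) : Str

/-- Positive contexts: a structure with one hole, not under a negation. -/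
inductive Ctx : Type
  | hole : Ctx
  | orl (S : Ctx) (T : Str) : Ctx
  | orr (T : Str) (S : Ctx) : Ctx
  | andl (S : Ctx) (T : Str) : Ctx
  | andr (T : Str) (S : Ctx) : Ctx

def Ctx.fill : Ctx → Str → Str
  | .hole, R => R
  | .orl S T, R => .or (S.fill R) T
  | .orr T S, R => .or T (S.fill R)
  | .andl S T, R => .and (S.fill R) T
  | .andr T S, R => .and T (S.fill R)

/-- Structural equivalence `=` of SKS. -/
inductive equiv : Str → Str → Prop
  | refl (R) : equiv R R
  | symm {A B} : equiv A B → equiv B A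
  | trans {A B C} : equiv A B → equiv B C → equiv A C
  | or_congr {A B C D} : equiv A B → equiv C D → equiv (.or A C) (.or B D)
  | and_congr {A B C D} : equiv A B → equiv C D → equiv (.and A C) (.and B D)
  | neg_congr {A B} : equiv A B → equiv (.neg A) (.neg B)
  | or_assoc (A B C) : equiv (.or (.or A B) C) (.or A (.or B C))
  | or_comm (A B) : equiv (.or A B) (.or B A)
  | and_assoc (A B C) : equiv (.and (.and A B) C) (.and A (.and B C))
  | and_comm (A B) : equiv (.and A B) (.and B A)
  | dm_or (A B) : equiv (.neg (.or A B)) (.and (.neg A) (.neg B))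
  | dm_and (A B) : equiv (.neg (.and A B)) (.or (.neg A) (.neg B))
  | neg_neg (A) : equiv (.neg (.neg A)) A
  | neg_f : equiv (.neg .f) .t
  | neg_t : equiv (.neg .t) .f
  | or_f (R) : equiv (.or .f R) R
  | and_t (R) : equiv (.and .t R) R
  | or_t_t : equiv (.or .t .t) .t
  | and_f_f : equiv (.and .f .f) .f

/-- Steps using only switch, weakening and generic cut. -/
inductive stepW : Str → Str → Prop
  | s (S : Ctx) (R U T : Str) :
      stepW (S.fill (.and (.or R U) T)) (S.fill (.or (.and R T) U))
  | w_down (S : Ctx) (R : Str) : stepW (S.fill .f) (S.fill R)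
  | i_up (S : Ctx) (R : Str) : stepW (S.fill (.and R (.neg R))) (S.fill .f)

inductive derivW : Str → Str → Prop
  | refl (R) : derivW R R
  | step {A B C} : stepW A B → derivW B C → derivW A C
  | eq {A B C} : equiv A B → derivW B C → derivW A C

/-! Derivations are closed under positive contexts, since a rule applied in context `D` inside `S`
is the same rule applied in the composite context. Hence it suffices to derive `t` from `R`
at top level, which is the switch–weakening–cut derivation of the paper. -/

def Ctx.comp : Ctx → Ctx → Ctx
  | .hole, D => D
  | .orl S T, D => .orl (S.comp D) T
  | .orr T S, D => .orr T (S.comp D)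
  | .andl S T, D => .andl (S.comp D) T
  | .andr T S, D => .andr T (S.comp D)

theorem Ctx.fill_comp (S D : Ctx) (R : Str) :
    (S.comp D).fill R = S.fill (D.fill R) := by
  induction S <;> simp only [Ctx.comp, Ctx.fill, *]

theorem equiv.fill (S : Ctx) {A B : Str} (h : equiv A B) :
    equiv (S.fill A) (S.fill B) := by
  induction S with
  | hole => exact h
  | orl S T ih => exact ih.or_congr (.refl T)
  | orr T S ih => exact (equiv.refl T).or_congr ih
  | andl S T ih => exact ih.and_congr (.refl T)
  | andr T S ih => exact (equiv.refl T).and_congr ih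

theorem stepW.fill (S : Ctx) {A B : Str} : stepW A B → stepW (S.fill A) (S.fill B)
  | .s D R U T => by simpa only [Ctx.fill_comp] using stepW.s (S.comp D) R U T
  | .w_down D R => by simpa only [Ctx.fill_comp] using stepW.w_down (S.comp D) R
  | .i_up D R => by simpa only [Ctx.fill_comp] using stepW.i_up (S.comp D) R

namespace derivW

theorem trans {A B C : Str} (hAB : derivW A B) (hBC : derivW B C) : derivW A C := by
  induction hAB with
  | refl => exact hBC
  | step h _ ih => exact .step h (ih hBC)
  | eq h _ ih => exact .eq h (ih hBC)

instance : Trans derivW derivW derivW := ⟨trans⟩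

theorem of_stepW {A B : Str} (h : stepW A B) : derivW A B := .step h (.refl B)

theorem of_equiv {A B : Str} (h : equiv A B) : derivW A B := .eq h (.refl B)

theorem fill (S : Ctx) {A B : Str} (h : derivW A B) : derivW (S.fill A) (S.fill B) := by
  induction h with
  | refl => exact .refl _
  | step h _ ih => exact .step (h.fill S) ih
  | eq h _ ih => exact .eq (h.fill S) ih

theorem to_t (R : Str) : derivW R .t :=
  calc derivW R (.and (.or .f .t) R) :=
        of_equiv ((equiv.and_t R).symm.trans ((equiv.or_f .t).symm.and_congr (.refl R)))
    derivW _ (.or (.and .f R) .t) := of_stepW (.s .hole .f .t R)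
    derivW _ (.or (.and (.neg R) R) .t) := of_stepW (.w_down (.orl (.andl .hole R) .t) (.neg R))
    derivW _ (.or (.and R (.neg R)) .t) := of_equiv ((equiv.and_comm _ _).or_congr (.refl _))
    derivW _ (.or .f .t) := of_stepW (.i_up (.orl .hole .t) R)
    derivW _ .t := of_equiv (equiv.or_f .t)

end derivW

/-- coweakening `w↑` is derivable from switch, weakening and generic cut. -/
theorem coweakening_derivable (S : Ctx) (R : Str) :
    derivW (S.fill R) (S.fill .t) :=
  (derivW.to_t R).fill S
end

section
/- No rule of SKS, applied to a boolean structure, has a premise equivalent to t and a conclusion equivalent to f: for each of the rules s, c↓, c↑, w↓ (and the degenerate interaction rules on units), if the premise is a boolean structure equal to t under =, then the conclusion is also equal to t. -/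
/-- One inference step of SKS, applied in an arbitrary positive context. -/
inductive step : Str → Str → Prop
  | ai_down (S : Ctx) (a : ℕ) :
      step (S.fill .t) (S.fill (.or (.atom a) (.neg (.atom a))))
  | ai_up (S : Ctx) (a : ℕ) :
      step (S.fill (.and (.atom a) (.neg (.atom a)))) (S.fill .f)
  | s (S : Ctx) (R U T : Str) :
      step (S.fill (.and (.or R U) T)) (S.fill (.or (.and R T) U))
  | c_down (S : Ctx) (R : Str) : step (S.fill (.or R R)) (S.fill R)
  | c_up (S : Ctx) (R : Str) : step (S.fill R) (S.fill (.and R R))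
  | w_down (S : Ctx) (R : Str) : step (S.fill .f) (S.fill R)
  | w_up (S : Ctx) (R : Str) : step (S.fill R) (S.fill .t)

/-- Derivations in SKS: chains of rule instances and equivalence steps. -/
inductive Deriv : Str → Str → Prop
  | refl (R) : Deriv R R
  | step {A B C} : step A B → Deriv B C → Deriv A C
  | eq {A B C} : equiv A B → Deriv B C → Deriv A C

/-- Boolean structures: built only from `f` and `t` by `[·,·]` and `(·,·)`. -/
def isBoolean : Str → Prop
  | .f => True
  | .t => True
  | .or A B => isBoolean A ∧ isBoolean B
  | .and A B => isBoolean A ∧ isBoolean B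
  | _ => False

/-!
Read `t` as true, `f` as false, `[·,·]` as disjunction, `(·,·)` as conjunction and `-` as negation.
Every equation generating `=` is a tautology, so equivalent structures have the same truth value
under any valuation of the atoms; every rule of SKS is sound, and since positive contexts are
monotone, so is each rule applied in context. Finally a boolean structure is `=` to the unit
naming its truth value, so a true boolean conclusion is equal to `t`.
-/

namespace Str

def eval (v : ℕ → Bool) : Str → Bool
  | .f => false
  | .t => true
  | .atom n => v n
  | .or A B => A.eval v || B.eval v
  | .and A B => A.eval v && B.eval v
  | .neg A => !A.eval v

def ofBool : Bool → Str
  | true => .t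
  | false => .f

theorem equiv_or_ofBool (a b : Bool) : equiv (.or (ofBool a) (ofBool b)) (ofBool (a || b)) := by
  cases a <;> cases b
  · exact .or_f _
  · exact .or_f _
  · exact .trans (.or_comm _ _) (.or_f _)
  · exact .or_t_t

theorem equiv_and_ofBool (a b : Bool) : equiv (.and (ofBool a) (ofBool b)) (ofBool (a && b)) := by
  cases a <;> cases b
  · exact .and_f_f
  · exact .trans (.and_comm _ _) (.and_t _)
  · exact .and_t _
  · exact .and_t _

theorem equiv_ofBool_eval {B : Str} (hB : isBoolean B) (v : ℕ → Bool) :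
    equiv B (ofBool (B.eval v)) := by
  induction B with
  | f | t => exact .refl _
  | atom | neg => exact hB.elim
  | or A B ihA ihB => exact .trans (.or_congr (ihA hB.1) (ihB hB.2)) (equiv_or_ofBool _ _)
  | and A B ihA ihB => exact .trans (.and_congr (ihA hB.1) (ihB hB.2)) (equiv_and_ofBool _ _)

end Str

theorem equiv.eval_eq {A B : Str} (h : equiv A B) (v : ℕ → Bool) : A.eval v = B.eval v := by
  induction h <;> simp_all [Str.eval, Bool.or_assoc, Bool.and_assoc, Bool.or_comm, Bool.and_comm]

theorem Ctx.eval_fill_imp (S : Ctx) {v : ℕ → Bool} {x y : Str}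
    (h : x.eval v = true → y.eval v = true) :
    (S.fill x).eval v = true → (S.fill y).eval v = true := by
  induction S <;> simp_all [Ctx.fill, Str.eval] <;> tauto

theorem step.eval_imp {A B : Str} (h : step A B) (v : ℕ → Bool) :
    A.eval v = true → B.eval v = true := by
  cases h <;> refine Ctx.eval_fill_imp _ fun hx => ?_ <;> simp_all [Str.eval]

theorem rules_truth_preserving_on_booleans_general (A B : Str) (h : step A B)
    (hB : isBoolean B) (ht : equiv A .t) : equiv B .t := by
  let v : ℕ → Bool := fun _ => true
  have hB_true : B.eval v = true := h.eval_imp v (ht.eval_eq v)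
  have hB_equiv := Str.equiv_ofBool_eval hB v
  rwa [hB_true] at hB_equiv

/-- no rule of SKS, applied to boolean structures, has premise
equal to `t` and conclusion equal to `f`: if the premise is a boolean structure
equal to `t` under `=`, the conclusion (also boolean) is equal to `t`. -/
theorem rules_truth_preserving_on_booleans (A B : Str) (h : step A B)
    (hA : isBoolean A) (hB : isBoolean B) (ht : equiv A .t) : equiv B .t :=
  rules_truth_preserving_on_booleans_general A B h hB ht
end
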